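/- For every finite connected simple graph G, mobmv(G) ≥ ω(G) and mobmv*(G) ≥ ω(G) − 1. -/

import Mathlib

open SimpleGraph

variable {V : Type*} {W : Type*}

/-- `S` is a general position set of `G`: no shortest path of `G` contains more than two
vertices of `S`. -/
def IsGenPosSet (G : SimpleGraph V) (S : Set V) : Prop :=
  ∀ ⦃u v : V⦄ (p : G.Walk u v), p.IsPath → p.length = G.dist u v →
    (S ∩ {x | x ∈ p.support}).ncard ≤ 2

/-- `S` is a mutual visibility set of `G`: any two vertices of `S` are joined by a shortest
path containing no further vertex of `S`. -/
def IsMutVisSet (G : SimpleGraph V) (S : Set V) : Prop :=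
  ∀ ⦃u⦄, u ∈ S → ∀ ⦃v⦄, v ∈ S → ∃ p : G.Walk u v,
    p.IsPath ∧ p.length = G.dist u v ∧ ∀ x ∈ p.support, x ∈ S → x = u ∨ x = v

/-- A legal move (with respect to the position property `P`) of a configuration of `t` robots
on distinct vertices: one robot moves to an adjacent unoccupied vertex, and the resulting set
of occupied vertices again satisfies `P`. -/
def LegalMove (G : SimpleGraph V) (P : Set V → Prop) {t : ℕ} (f g : Fin t ↪ V) : Prop :=
  ∃ i : Fin t, G.Adj (f i) (g i) ∧ g i ∉ Set.range ⇑f ∧ (∀ j, j ≠ i → g j = f j) ∧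
    P (Set.range ⇑g)

/-- A configuration is a mobile `P`-configuration if it satisfies `P` and there is a sequence
of legal moves starting from it such that every vertex is visited by some robot. -/
def IsMobileConfig (G : SimpleGraph V) (P : Set V → Prop) {t : ℕ} (f : Fin t ↪ V) : Prop :=
  P (Set.range ⇑f) ∧ ∃ (N : ℕ) (c : ℕ → (Fin t ↪ V)), c 0 = f ∧
    (∀ k < N, LegalMove G P (c k) (c (k + 1))) ∧ ∀ v : V, ∃ k ≤ N, ∃ i, c k i = v

/-- A configuration is completely mobile if it is mobile and moreover every robot can visit
every vertex via a sequence of legal moves. -/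
def IsCompletelyMobileConfig (G : SimpleGraph V) (P : Set V → Prop) {t : ℕ}
    (f : Fin t ↪ V) : Prop :=
  IsMobileConfig G P f ∧ ∀ (v : V) (i : Fin t), ∃ (N : ℕ) (c : ℕ → (Fin t ↪ V)), c 0 = f ∧
    (∀ k < N, LegalMove G P (c k) (c (k + 1))) ∧ ∃ k ≤ N, c k i = v

/-- The mobile general position number `mob(G)`. -/
noncomputable def mobGP (G : SimpleGraph V) : ℕ :=
  sSup {t : ℕ | ∃ f : Fin t ↪ V, IsMobileConfig G (IsGenPosSet G) f}

/-- The completely mobile general position number `mob*(G)`. -/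
noncomputable def cmobGP (G : SimpleGraph V) : ℕ :=
  sSup {t : ℕ | ∃ f : Fin t ↪ V, IsCompletelyMobileConfig G (IsGenPosSet G) f}

/-- The mobile mutual visibility number `mobmv(G)`. -/
noncomputable def mobMV (G : SimpleGraph V) : ℕ :=
  sSup {t : ℕ | ∃ f : Fin t ↪ V, IsMobileConfig G (IsMutVisSet G) f}

/-- The completely mobile mutual visibility number `mobmv*(G)`. -/
noncomputable def cmobMV (G : SimpleGraph V) : ℕ :=
  sSup {t : ℕ | ∃ f : Fin t ↪ V, IsCompletelyMobileConfig G (IsMutVisSet G) f}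

/-- The mutual visibility number `μ(G)`. -/
noncomputable def muMV (G : SimpleGraph V) : ℕ :=
  sSup {n : ℕ | ∃ S : Set V, IsMutVisSet G S ∧ S.ncard = n}

/-- `μ₂(G)`: the largest cardinality of a mutual visibility set whose vertices are pairwise at
distance at most `2`. -/
noncomputable def muMV2 (G : SimpleGraph V) : ℕ :=
  sSup {n : ℕ | ∃ S : Set V, IsMutVisSet G S ∧ (∀ u ∈ S, ∀ v ∈ S, G.dist u v ≤ 2) ∧
    S.ncard = n}

/-- The join `G ∨ H` of two graphs: the disjoint union together with all edges between the
two vertex sets. -/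
def graphJoin (G : SimpleGraph V) (H : SimpleGraph W) : SimpleGraph (V ⊕ W) where
  Adj x y := match x, y with
    | Sum.inl a, Sum.inl b => G.Adj a b
    | Sum.inr a, Sum.inr b => H.Adj a b
    | Sum.inl _, Sum.inr _ => True
    | Sum.inr _, Sum.inl _ => True
  symm := by constructor; rintro (a | a) (b | b) h <;> simp_all <;> exact h.symm
  loopless := by constructor; rintro (a | a) h <;> simp_all

/-- The strong product `G ⊠ H` of two graphs. -/
def strongProd (G : SimpleGraph V) (H : SimpleGraph W) : SimpleGraph (V × W) where
  Adj x y := (x.1 = y.1 ∧ H.Adj x.2 y.2) ∨ (x.2 = y.2 ∧ G.Adj x.1 y.1) ∨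
    (G.Adj x.1 y.1 ∧ H.Adj x.2 y.2)
  symm := by
    constructor
    rintro ⟨a, b⟩ ⟨c, d⟩ (⟨h1, h2⟩ | ⟨h1, h2⟩ | ⟨h1, h2⟩)
    · exact Or.inl ⟨h1.symm, h2.symm⟩
    · exact Or.inr (Or.inl ⟨h1.symm, h2.symm⟩)
    · exact Or.inr (Or.inr ⟨h1.symm, h2.symm⟩)
  loopless := by constructor; rintro ⟨a, b⟩ (⟨_, h⟩ | ⟨_, h⟩ | ⟨h, _⟩) <;> simp_all

/-- A vertex `u` is a hub if any two distinct non-adjacent vertices different from `u` are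
both adjacent to `u`. -/
def IsHub (G : SimpleGraph V) (u : V) : Prop :=
  ∀ ⦃w₁ w₂ : V⦄, w₁ ≠ u → w₂ ≠ u → w₁ ≠ w₂ → ¬G.Adj w₁ w₂ → G.Adj w₁ u ∧ G.Adj w₂ u

/-- A block graph: every block is complete; equivalently, the vertices of any cycle form a
clique. -/
def IsBlockGraph (G : SimpleGraph V) : Prop :=
  ∀ (v : V) (c : G.Walk v v), c.IsCycle → G.IsClique {x | x ∈ c.support}

/-- The graph obtained from the complete graph `K n` (on vertices `1, ..., n`) by attaching
one pendant vertex `0`, adjacent only to vertex `1`. -/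
def cliqueWithLeaf (n : ℕ) : SimpleGraph (Fin (n + 1)) :=
  SimpleGraph.fromRel (fun i j => (i ≠ 0 ∧ j ≠ 0) ∨ (i = 0 ∧ j = 1))

/-- `G` is (isomorphic to) a path graph. -/
def IsPathGraph (G : SimpleGraph V) : Prop :=
  ∃ n : ℕ, Nonempty (G ≃g pathGraph n)

/-!
Let `Q` be a maximum clique and let `w ∈ Q` be a vertex of `Q` nearest to a vertex `x`. Then
`(Q \ {w}) ∪ {x}` is a mutual visibility set: a shortest path from `x` to `u ∈ Q \ {w}` either
meets `Q` only in `u`, or is a shortest path to `w` followed by the edge `wu`. Moreover `w` stays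
nearest to every vertex of a shortest path from `w` to `x`, so with robots on all of `Q` the
robot on `w` can walk to `x`; since legal moves between mutual visibility sets are reversible,
these excursions can be chained into one sequence visiting every vertex. With robots on all but
one vertex of `Q`, the free vertex lets any robot first move to any vertex of `Q`, and then walk
out from there.
-/

open Relation

section Sequences

variable {α : Type*} {r : α → α → Prop}

theorem exists_seq_of_reflTransGen {a b : α} (h : ReflTransGen r a b) :
    ∃ (N : ℕ) (c : ℕ → α), c 0 = a ∧ c N = b ∧ ∀ k < N, r (c k) (c (k + 1)) := by
  induction h using ReflTransGen.head_induction_on with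
  | refl => exact ⟨0, fun _ => b, rfl, rfl, by simp⟩
  | @head a _ hab _ ih =>
    obtain ⟨N, c, hc0, hcN, hc⟩ := ih
    refine ⟨N + 1, fun | 0 => a | k + 1 => c k, rfl, hcN, ?_⟩
    rintro (_ | k) hk
    · simpa [hc0] using hab
    · exact hc k (by omega)

theorem exists_seq_append {N₁ N₂ : ℕ} {c₁ c₂ : ℕ → α}
    (h₁ : ∀ k < N₁, r (c₁ k) (c₁ (k + 1)))
    (h₂ : ∀ k < N₂, r (c₂ k) (c₂ (k + 1))) (hjoin : c₁ N₁ = c₂ 0) :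
    ∃ c : ℕ → α, (∀ k < N₁ + N₂, r (c k) (c (k + 1))) ∧
      (∀ k ≤ N₁, c k = c₁ k) ∧ ∀ k, c (N₁ + k) = c₂ k := by
  let c k := if k ≤ N₁ then c₁ k else c₂ (k - N₁)
  have hc₁ : ∀ k ≤ N₁, c k = c₁ k := fun k hk => if_pos hk
  have hc₂ : ∀ k, c (N₁ + k) = c₂ k := by
    rintro (_ | k)
    · simp [c, hjoin]
    · simp [c]
  refine ⟨c, fun k hk => ?_, hc₁, hc₂⟩
  rcases lt_or_ge k N₁ with hk₁ | hk₁
  · rw [hc₁ k hk₁.le, hc₁ (k + 1) hk₁]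
    exact h₁ k hk₁
  · obtain ⟨j, rfl⟩ := Nat.exists_eq_add_of_le hk₁
    rw [hc₂, add_assoc, hc₂]
    exact h₂ j (by omega)

theorem exists_seq_visiting {ι : Type*} (P : ι → α → Prop) (s : Finset ι) {a : α}
    (h : ∀ i ∈ s, ∃ b, ReflTransGen r a b ∧ ReflTransGen r b a ∧ P i b) :
    ∃ (N : ℕ) (c : ℕ → α), c 0 = a ∧ c N = a ∧ (∀ k < N, r (c k) (c (k + 1))) ∧
      ∀ i ∈ s, ∃ k ≤ N, P i (c k) := by
  classical
  induction s using Finset.induction_on with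
  | empty => exact ⟨0, fun _ => a, rfl, rfl, by simp, by simp⟩
  | @insert i s _ ih =>
    obtain ⟨N₃, c₃, hc₃0, hc₃N, hc₃, hvis⟩ :=
      ih fun j hj => h j (Finset.mem_insert_of_mem hj)
    obtain ⟨b, hab, hba, hPb⟩ := h i (Finset.mem_insert_self i s)
    obtain ⟨N₁, c₁, hc₁0, hc₁N, hc₁⟩ := exists_seq_of_reflTransGen hab
    obtain ⟨N₂, c₂, hc₂0, hc₂N, hc₂⟩ := exists_seq_of_reflTransGen hba
    obtain ⟨d, hd, hd₂, hd₃⟩ := exists_seq_append hc₂ hc₃ (hc₂N.trans hc₃0.symm)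
    obtain ⟨c, hc, hcd₁, hcd⟩ :=
      exists_seq_append hc₁ hd (by rw [hc₁N, hd₂ 0 (Nat.zero_le _), hc₂0])
    refine ⟨N₁ + (N₂ + N₃), c, by rw [hcd₁ 0 (Nat.zero_le _), hc₁0],
      by rw [hcd, hd₃, hc₃N], hc, ?_⟩
    rintro j hj
    rcases Finset.mem_insert.mp hj with rfl | hj
    · exact ⟨N₁, by omega, by rwa [hcd₁ N₁ le_rfl, hc₁N]⟩
    · obtain ⟨k, hk, hPk⟩ := hvis j hj
      exact ⟨N₁ + (N₂ + k), by omega, by rwa [hcd, hd₃]⟩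

end Sequences

namespace SimpleGraph

variable {G : SimpleGraph V}

def SVisible (G : SimpleGraph V) (S : Set V) (u v : V) : Prop :=
  ∃ p : G.Walk u v, p.IsPath ∧ p.length = G.dist u v ∧
    ∀ x ∈ p.support, x ∈ S → x = u ∨ x = v

theorem SVisible.of_walk {S : Set V} {u v : V} (p : G.Walk u v) (hp : p.length = G.dist u v)
    (hS : ∀ x ∈ p.support, x ∈ S → x = u ∨ x = v) : G.SVisible S u v :=
  ⟨p, p.isPath_of_length_eq_dist hp, hp, hS⟩

theorem SVisible.symm {S : Set V} {u v : V} (h : G.SVisible S u v) : G.SVisible S v u := by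
  obtain ⟨p, -, hp, hS⟩ := h
  refine .of_walk p.reverse (by rw [Walk.length_reverse, hp, dist_comm]) fun x hx hxS => ?_
  rw [Walk.support_reverse, List.mem_reverse] at hx
  exact (hS x hx hxS).symm

theorem SVisible.mono {S T : Set V} {u v : V} (h : G.SVisible S u v) (hTS : T ⊆ S) :
    G.SVisible T u v := by
  obtain ⟨p, hpath, hp, hS⟩ := h
  exact ⟨p, hpath, hp, fun x hx hxT => hS x hx (hTS hxT)⟩

theorem _root_.IsMutVisSet.mono {S T : Set V} (hS : IsMutVisSet G S) (hTS : T ⊆ S) :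
    IsMutVisSet G T := fun _ hu _ hv => SVisible.mono (hS (hTS hu) (hTS hv)) hTS

theorem SVisible.refl (S : Set V) (u : V) : G.SVisible S u u :=
  .of_walk .nil (by simp) (by simp)

theorem SVisible.of_adj (S : Set V) {u v : V} (h : G.Adj u v) : G.SVisible S u v :=
  .of_walk (.cons h .nil) (by simp [dist_eq_one_iff_adj.mpr h]) (by simp)

theorem IsClique.sVisible {Q : Set V} (hQ : G.IsClique Q) (S : Set V) {u v : V} (hu : u ∈ Q)
    (hv : v ∈ Q) : G.SVisible S u v := by
  rcases eq_or_ne u v with rfl | huv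
  · exact .refl S u
  · exact .of_adj S (hQ hu hv huv)

theorem IsClique.isMutVisSet {Q : Set V} (hQ : G.IsClique Q) : IsMutVisSet G Q :=
  fun _ hu _ hv => hQ.sVisible Q hu hv

theorem Walk.dist_add_dist_of_mem_support {u v y : V} {p : G.Walk u v}
    (hp : p.length = G.dist u v) (hy : y ∈ p.support) :
    G.dist u y + G.dist y v = G.dist u v := by
  classical
  rw [← length_eq_dist_of_subwalk hp (p.isSubwalk_takeUntil hy),
    ← length_eq_dist_of_subwalk hp (p.isSubwalk_dropUntil hy), ← Walk.length_append,
    p.take_spec hy, hp]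

theorem Walk.eq_of_mem_support_of_dist_le {u v y : V} {p : G.Walk u v}
    (hp : p.length = G.dist u v) (hy : y ∈ p.support) (h : G.dist u v ≤ G.dist u y) :
    y = v := by
  classical
  have := p.dist_add_dist_of_mem_support hp hy
  exact (p.dropUntil y hy).reachable.dist_eq_zero_iff.mp (by omega)

def IsNearestIn (G : SimpleGraph V) (Q : Set V) (x w : V) : Prop :=
  w ∈ Q ∧ ∀ u ∈ Q, G.dist x w ≤ G.dist x u

theorem exists_isNearestIn {Q : Set V} (hQ : Q.Finite) (hne : Q.Nonempty) (x : V) :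
    ∃ w, G.IsNearestIn Q x w := by
  obtain ⟨w, hw, hmin⟩ := Set.exists_min_image Q (G.dist x) hQ hne
  exact ⟨w, hw, hmin⟩

theorem IsNearestIn.eq_of_mem (hconn : G.Connected) {Q : Set V} {x w : V}
    (h : G.IsNearestIn Q x w) (hx : x ∈ Q) : x = w :=
  hconn.dist_eq_zero_iff.mp (by simpa using h.2 x hx)

theorem IsNearestIn.of_mem_support (hconn : G.Connected) {Q : Set V} {v w y : V}
    (h : G.IsNearestIn Q v w) {p : G.Walk w v} (hp : p.length = G.dist w v)
    (hy : y ∈ p.support) : G.IsNearestIn Q y w := by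
  refine ⟨h.1, fun u hu => ?_⟩
  have hsplit := p.dist_add_dist_of_mem_support hp hy
  have hvu := h.2 u hu
  have htri : G.dist v u ≤ G.dist v y + G.dist y u := hconn.dist_triangle
  rw [dist_comm (u := v) (v := w)] at hvu
  rw [dist_comm (u := v) (v := y)] at htri
  rw [dist_comm]
  omega

theorem isMutVisSet_insert_diff (hconn : G.Connected) {Q : Set V} (hQ : G.IsClique Q)
    {x w : V} (h : G.IsNearestIn Q x w) : IsMutVisSet G (insert x (Q \ {w})) := by
  have hx : ∀ u ∈ Q \ {w}, G.SVisible (insert x (Q \ {w})) x u := by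
    rintro u ⟨hu, huw⟩
    have hwu : G.Adj w u := hQ h.1 hu (Ne.symm huw)
    have hle : G.dist x u ≤ G.dist x w + 1 := by
      simpa [dist_eq_one_iff_adj.mpr hwu] using hconn.dist_triangle (u := x) (v := w) (w := u)
    rcases (h.2 u hu).eq_or_lt with heq | hlt
    · obtain ⟨p, -, hp⟩ := hconn.exists_path_of_dist x u
      refine .of_walk p hp fun y hy => ?_
      rintro (rfl | ⟨hyQ, -⟩)
      · exact .inl rfl
      · exact .inr (p.eq_of_mem_support_of_dist_le hp hy (heq ▸ h.2 y hyQ))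
    · obtain ⟨p, -, hp⟩ := hconn.exists_path_of_dist x w
      refine .of_walk (p.concat hwu) (by rw [Walk.length_concat, hp]; omega) fun y hy => ?_
      rw [Walk.support_concat, List.mem_append, List.mem_singleton] at hy
      rintro (rfl | ⟨hyQ, hyw⟩)
      · exact .inl rfl
      · rcases hy with hy | rfl
        · exact absurd (p.eq_of_mem_support_of_dist_le hp hy (h.2 y hyQ)) hyw
        · exact .inr rfl
  rintro a (rfl | ha) b (rfl | hb)
  · exact SVisible.refl _ _
  · exact hx b hb
  · exact (hx a ha).symm
  · exact hQ.sVisible _ ha.1 hb.1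

end SimpleGraph

section Robots

variable {G : SimpleGraph V} {P : Set V → Prop} {t : ℕ}

theorem LegalMove.symm {f g : Fin t ↪ V} (h : LegalMove G P f g) (hf : P (Set.range f)) :
    LegalMove G P g f := by
  obtain ⟨i, hadj, hgi, hstay, -⟩ := h
  refine ⟨i, hadj.symm, ?_, fun j hj => (hstay j hj).symm, hf⟩
  rintro ⟨j, hj⟩
  rcases eq_or_ne j i with rfl | hji
  · exact hadj.ne hj.symm
  · exact hji (f.injective (by rw [← hj, hstay j hji]))

theorem prop_range_of_reflTransGen_legalMove {f g : Fin t ↪ V}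
    (h : ReflTransGen (LegalMove G P) f g) (hf : P (Set.range f)) : P (Set.range g) := by
  induction h with
  | refl => exact hf
  | tail _ hmove => obtain ⟨-, -, -, -, hP⟩ := hmove; exact hP

theorem reflTransGen_legalMove_symm {f g : Fin t ↪ V} (h : ReflTransGen (LegalMove G P) f g)
    (hf : P (Set.range f)) : ReflTransGen (LegalMove G P) g f := by
  induction h with
  | refl => exact .refl
  | tail hfb hmove ih =>
    exact .head (hmove.symm (prop_range_of_reflTransGen_legalMove hfb hf)) ih

theorem isMobileConfig_of_forall_reach [Finite V] {f : Fin t ↪ V} (hf : P (Set.range f))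
    (h : ∀ v, ∃ g, ReflTransGen (LegalMove G P) f g ∧ v ∈ Set.range g) :
    IsMobileConfig G P f := by
  have := Fintype.ofFinite V
  obtain ⟨N, c, hc0, -, hc, hvis⟩ :=
    exists_seq_visiting (fun v (g : Fin t ↪ V) => v ∈ Set.range g) Finset.univ fun v _ => by
      obtain ⟨g, hfg, hv⟩ := h v
      exact ⟨g, hfg, reflTransGen_legalMove_symm hfg hf, hv⟩
  exact ⟨hf, N, c, hc0, hc, fun v => hvis v (Finset.mem_univ v)⟩

theorem isCompletelyMobileConfig_of_forall_reach [Finite V] [NeZero t] {f : Fin t ↪ V}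
    (hf : P (Set.range f)) (h : ∀ v i, ∃ g, ReflTransGen (LegalMove G P) f g ∧ g i = v) :
    IsCompletelyMobileConfig G P f := by
  refine ⟨isMobileConfig_of_forall_reach hf fun v => ?_, fun v i => ?_⟩
  · obtain ⟨g, hfg, hg⟩ := h v 0
    exact ⟨g, hfg, 0, hg⟩
  · obtain ⟨g, hfg, hg⟩ := h v i
    obtain ⟨N, c, hc0, hcN, hc⟩ := exists_seq_of_reflTransGen hfg
    exact ⟨N, c, hc0, hc, N, le_rfl, by rw [hcN, hg]⟩

end Robots

namespace Function.Embedding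

variable {ι β : Type*} [DecidableEq ι] [DecidableEq β] {f : ι ↪ β} {b : β}

theorem setValue_apply_of_notMem_range (hb : b ∉ Set.range f) {i j : ι} (hj : j ≠ i) :
    f.setValue i b j = f j :=
  setValue_eq_of_ne hj fun h => hb ⟨j, h⟩

theorem range_setValue_subset (hb : b ∉ Set.range f) (i : ι) :
    Set.range (f.setValue i b) ⊆ insert b (f '' {i}ᶜ) := by
  rintro _ ⟨j, rfl⟩
  rcases eq_or_ne j i with rfl | hj
  · exact .inl (setValue_eq f j b)
  · exact .inr ⟨j, hj, (setValue_apply_of_notMem_range hb hj).symm⟩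

end Function.Embedding

section MutualVisibilityMoves

open Function.Embedding

variable {G : SimpleGraph V} {t : ℕ}

theorem legalMove_setValue [DecidableEq V] {P : Set V → Prop} {f : Fin t ↪ V} {i : Fin t}
    {x : V} (hadj : G.Adj (f i) x) (hx : x ∉ Set.range f) (hP : P (Set.range (f.setValue i x))) :
    LegalMove G P f (f.setValue i x) :=
  ⟨i, by simpa using hadj, by simpa using hx, fun _ hj => setValue_apply_of_notMem_range hx hj,
    hP⟩

theorem legalMove_setValue_of_isClique [DecidableEq V] {Q : Set V} (hQ : G.IsClique Q)
    {f : Fin t ↪ V} (hf : Set.range f ⊆ Q) {x : V} (hxQ : x ∈ Q) (hx : x ∉ Set.range f)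
    (i : Fin t) :
    LegalMove G (IsMutVisSet G) f (f.setValue i x) ∧ Set.range (f.setValue i x) ⊆ Q := by
  have hsub : Set.range (f.setValue i x) ⊆ Q :=
    (range_setValue_subset hx i).trans
      (Set.insert_subset hxQ ((Set.image_subset_range _ _).trans hf))
  exact ⟨legalMove_setValue (hQ (hf ⟨i, rfl⟩) hxQ fun h => hx ⟨i, h⟩) hx
    (hQ.subset hsub).isMutVisSet, hsub⟩

theorem exists_reach_apply_eq_of_isClique {Q : Set V} (hQ : G.IsClique Q) {f : Fin t ↪ V}
    (hf : Set.range f ⊆ Q) {q : V} (hqQ : q ∈ Q) (hq : q ∉ Set.range f) (i : Fin t) {w : V}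
    (hw : w ∈ Q) : ∃ g, ReflTransGen (LegalMove G (IsMutVisSet G)) f g ∧ g i = w ∧
      Set.range g ⊆ Q := by
  classical
  by_cases hwf : w ∈ Set.range f
  · obtain ⟨j, rfl⟩ := hwf
    rcases eq_or_ne j i with rfl | hji
    · exact ⟨f, .refl, rfl, hf⟩
    -- the robot on `f j` first moves to the free vertex `q`
    obtain ⟨hmove₁, hf₁⟩ := legalMove_setValue_of_isClique hQ hf hqQ hq j
    have hfj : f j ∉ Set.range (f.setValue j q) := fun hmem => by
      rcases range_setValue_subset hq j hmem with h | ⟨k, hk, h⟩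
      · exact hq ⟨j, h⟩
      · exact hk (f.injective h)
    obtain ⟨hmove₂, hf₂⟩ := legalMove_setValue_of_isClique hQ hf₁ (hf ⟨j, rfl⟩) hfj i
    exact ⟨_, .tail (.single hmove₁) hmove₂, setValue_eq _ _ _, hf₂⟩
  · obtain ⟨hmove, hf'⟩ := legalMove_setValue_of_isClique hQ hf hw hwf i
    exact ⟨_, .single hmove, setValue_eq _ _ _, hf'⟩

theorem exists_reach_apply_eq_of_walk (hconn : G.Connected) {Q : Set V} (hQ : G.IsClique Q)
    {w : V} (i : Fin t) {x v : V} (p : G.Walk x v) (hp : ∀ y ∈ p.support, G.IsNearestIn Q y w)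
    (f : Fin t ↪ V) (hfi : f i = x) (hf : ∀ j ≠ i, f j ∈ Q \ {w}) :
    ∃ g, ReflTransGen (LegalMove G (IsMutVisSet G)) f g ∧ g i = v := by
  classical
  induction p generalizing f with
  | nil => exact ⟨f, .refl, hfi⟩
  | @cons x z v hadj p ih =>
    have hz : G.IsNearestIn Q z w := hp z (by simp)
    have hzf : z ∉ Set.range f := by
      rintro ⟨j, hj⟩
      rcases eq_or_ne j i with rfl | hji
      · exact hadj.ne (hfi ▸ hj)
      · exact (hf j hji).2 (hj.trans (hz.eq_of_mem hconn (hj ▸ (hf j hji).1)))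
    have hmove : LegalMove G (IsMutVisSet G) f (f.setValue i z) := by
      refine legalMove_setValue (hfi ▸ hadj) hzf ((isMutVisSet_insert_diff hconn hQ hz).mono ?_)
      exact (range_setValue_subset hzf i).trans
        (Set.insert_subset_insert (Set.image_subset_iff.mpr fun j hj => hf j hj))
    obtain ⟨g, hg, hgi⟩ := ih (fun y hy => hp y (by simp [hy])) (f.setValue i z)
      (setValue_eq _ _ _) fun j hj => by rw [setValue_apply_of_notMem_range hzf hj]; exact hf j hj
    exact ⟨g, .head hmove hg, hgi⟩

theorem exists_reach_apply_eq_of_isNearestIn (hconn : G.Connected) {Q : Set V}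
    (hQ : G.IsClique Q) {f : Fin t ↪ V} (hf : Set.range f ⊆ Q) {i : Fin t} {v : V}
    (hv : G.IsNearestIn Q v (f i)) :
    ∃ g, ReflTransGen (LegalMove G (IsMutVisSet G)) f g ∧ g i = v := by
  obtain ⟨p, -, hp⟩ := hconn.exists_path_of_dist (f i) v
  exact exists_reach_apply_eq_of_walk hconn hQ i p (fun y hy => hv.of_mem_support hconn hp hy)
    f rfl fun j hj => ⟨hf ⟨j, rfl⟩, fun h => hj (f.injective h)⟩

end MutualVisibilityMoves

theorem Finset.exists_embedding_range_eq {α : Type*} (s : Finset α) :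
    ∃ f : Fin s.card ↪ α, Set.range f = s :=
  ⟨s.equivFin.symm.toEmbedding.trans (.subtype _), by
    rw [Function.Embedding.coe_trans]
    simp [Set.range_comp]⟩

theorem bddAbove_setOf_exists_embedding [Finite V] (p : (t : ℕ) → (Fin t ↪ V) → Prop) :
    BddAbove {t : ℕ | ∃ f : Fin t ↪ V, p t f} :=
  ⟨Nat.card V, fun t ⟨f, _⟩ => by simpa using Finite.card_le_of_embedding f⟩

section MobileVisibilityNumbers

variable {G : SimpleGraph V} {t : ℕ}

theorem le_mobMV [Finite V] {f : Fin t ↪ V} (h : IsMobileConfig G (IsMutVisSet G) f) :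
    t ≤ mobMV G :=
  le_csSup (bddAbove_setOf_exists_embedding _) ⟨f, h⟩

theorem le_cmobMV [Finite V] {f : Fin t ↪ V} (h : IsCompletelyMobileConfig G (IsMutVisSet G) f) :
    t ≤ cmobMV G :=
  le_csSup (bddAbove_setOf_exists_embedding _) ⟨f, h⟩

theorem isMobileConfig_of_range_eq_clique [Finite V] (hconn : G.Connected) {Q : Set V}
    (hQ : G.IsClique Q) (hQne : Q.Nonempty) {f : Fin t ↪ V} (hf : Set.range f = Q) :
    IsMobileConfig G (IsMutVisSet G) f :=
  isMobileConfig_of_forall_reach (hf ▸ hQ.isMutVisSet) fun v => by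
    obtain ⟨w, hw⟩ := exists_isNearestIn Q.toFinite hQne v
    obtain ⟨i, rfl⟩ : w ∈ Set.range f := hf ▸ hw.1
    obtain ⟨g, hfg, hgi⟩ := exists_reach_apply_eq_of_isNearestIn hconn hQ hf.subset hw
    exact ⟨g, hfg, i, hgi⟩

theorem isCompletelyMobileConfig_of_range_ssubset_clique [Finite V] [NeZero t]
    (hconn : G.Connected) {Q : Set V} (hQ : G.IsClique Q) {f : Fin t ↪ V}
    (hf : Set.range f ⊂ Q) : IsCompletelyMobileConfig G (IsMutVisSet G) f :=
  isCompletelyMobileConfig_of_forall_reach (hQ.subset hf.subset).isMutVisSet fun v i => by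
    obtain ⟨q, hqQ, hq⟩ := Set.exists_of_ssubset hf
    obtain ⟨w, hw⟩ := exists_isNearestIn Q.toFinite ⟨q, hqQ⟩ v
    obtain ⟨g, hfg, hgi, hg⟩ := exists_reach_apply_eq_of_isClique hQ hf.subset hqQ hq i hw.1
    obtain ⟨h, hgh, hhi⟩ := exists_reach_apply_eq_of_isNearestIn hconn hQ hg (hgi ▸ hw)
    exact ⟨h, hfg.trans hgh, hhi⟩

end MobileVisibilityNumbers

theorem stmt_3 {V : Type*} [Fintype V] (G : SimpleGraph V) (hconn : G.Connected) :
    G.cliqueNum ≤ mobMV G ∧ G.cliqueNum - 1 ≤ cmobMV G := by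
  classical
  obtain ⟨Q, hQ⟩ := G.exists_isNClique_cliqueNum
  obtain ⟨v⟩ := hconn.nonempty
  have hω : 1 ≤ G.cliqueNum := by
    simpa using IsClique.card_le_cliqueNum (G := G) (t := {v}) (tc := by simp)
  have hQne : Q.Nonempty := Finset.card_pos.mp (hQ.card_eq ▸ hω)
  rw [← hQ.card_eq]
  constructor
  · obtain ⟨f, hf⟩ := Q.exists_embedding_range_eq
    exact le_mobMV
      (isMobileConfig_of_range_eq_clique hconn hQ.isClique (Finset.coe_nonempty.mpr hQne) hf)
  · obtain ⟨q, hq⟩ := hQne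
    obtain ⟨f, hf⟩ := (Q.erase q).exists_embedding_range_eq
    rw [← Finset.card_erase_of_mem hq]
    obtain h0 | hpos := Nat.eq_zero_or_pos (Q.erase q).card
    · omega
    · have : NeZero (Q.erase q).card := ⟨hpos.ne'⟩
      have hfQ : Set.range f ⊂ Q := by
        rw [hf]
        exact_mod_cast Finset.erase_ssubset hq
      exact le_cmobMV (isCompletelyMobileConfig_of_range_ssubset_clique hconn hQ.isClique hfQ)
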